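/- Let μ = (∅, …, ∅, (1^n)) be the r-partition whose last component is the one-column partition (1^n) and whose other components are empty. Then for every r-partition λ of size n: β_{λμ} = 1 if λ = ((1^{n_1}), (1^{n_2}), …, (1^{n_r})) for some nonnegative integers n_1,…,n_r with n_1+…+n_r = n (each component a one-column partition or empty), and β_{λμ} = 0 otherwise. -/

import Mathlib

open scoped BigOperators

namespace CQSA

/-- A box of a multidiagram: component `k`, row `i`, column `j` (0-indexed column). -/
abbrev Box (r : ℕ) (m : Fin r → ℕ) : Type := Σ k : Fin r, Fin (m k) × ℕ

/-- An entry of a tableau: component `c`, letter `a` (0-indexed). -/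
abbrev Entry (r : ℕ) (m : Fin r → ℕ) : Type := Σ c : Fin r, Fin (m c)

/-- Multicompositions with `m k` parts in component `k`. -/
abbrev MComp (r : ℕ) (m : Fin r → ℕ) : Type := (k : Fin r) → Fin (m k) → ℕ

variable {r : ℕ} {m : Fin r → ℕ}

/-- The size `|λ|` of a multicomposition. -/
def size (lam : MComp r m) : ℕ := ∑ k, ∑ i, lam k i

/-- A multicomposition is a multipartition if each component is weakly decreasing. -/
def IsMPartition (lam : MComp r m) : Prop := ∀ k, Antitone (lam k)

/-- `ζ(λ) = (|λ^(1)|, …, |λ^(r)|)`. -/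
def zeta (lam : MComp r m) : Fin r → ℕ := fun k => ∑ i, lam k i

/-- Dominance order: `mu ⊴ lam`. -/
def DomLE (mu lam : MComp r m) : Prop :=
  ∀ (k : Fin r) (i : Fin (m k)),
    ((∑ l ∈ Finset.univ.filter (fun l => l < k), ∑ j, mu l j) +
        ∑ j ∈ Finset.univ.filter (fun j => j ≤ i), mu k j) ≤
      ((∑ l ∈ Finset.univ.filter (fun l => l < k), ∑ j, lam l j) +
        ∑ j ∈ Finset.univ.filter (fun j => j ≤ i), lam k j)

/-- Membership of a box in the diagram `[λ]`. -/
def InDiag (lam : MComp r m) (x : Box r m) : Prop := x.2.2 < lam x.1 x.2.1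

/-- The skew diagram `[λ] \ [ν]` as a predicate on boxes. -/
def SkewD (lamBig lamSmall : MComp r m) (x : Box r m) : Prop :=
  InDiag lamBig x ∧ ¬ InDiag lamSmall x

/-- Order on entries: `(a,c) ≤ (a',c')` iff `c < c'`, or `c = c'` and `a ≤ a'`. -/
def entryLE (e f : Entry r m) : Prop :=
  (e.1 : ℕ) < (f.1 : ℕ) ∨ ((e.1 : ℕ) = (f.1 : ℕ) ∧ (e.2 : ℕ) ≤ (f.2 : ℕ))

/-- Strict order on entries. -/
def entryLT (e f : Entry r m) : Prop :=
  (e.1 : ℕ) < (f.1 : ℕ) ∨ ((e.1 : ℕ) = (f.1 : ℕ) ∧ (e.2 : ℕ) < (f.2 : ℕ))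

/-- Reading order on boxes: `x ⪰ y`, i.e. `x ≻ y` or `x = y`, where
`(i,j,k) ≻ (i',j',k')` iff `k > k'`, or `k = k'` and `j > j'`, or
`k = k'`, `j = j'` and `i < i'`. -/
def BoxGE (x y : Box r m) : Prop :=
  (y.1 : ℕ) < (x.1 : ℕ) ∨
    ((x.1 : ℕ) = (y.1 : ℕ) ∧
      (y.2.2 < x.2.2 ∨ (x.2.2 = y.2.2 ∧ (x.2.1 : ℕ) ≤ (y.2.1 : ℕ))))

/-- Semistandardness of a filling `T` of the set of boxes `D` with weight `mu`. -/
structure IsSST (D : Box r m → Prop) (mu : MComp r m)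
    (T : {x : Box r m // D x} → Entry r m) : Prop where
  comp_le : ∀ x : {x : Box r m // D x}, (x.1.1 : ℕ) ≤ ((T x).1 : ℕ)
  row_weak : ∀ x y : {x : Box r m // D x},
    x.1.1 = y.1.1 → (x.1.2.1 : ℕ) = (y.1.2.1 : ℕ) → x.1.2.2 + 1 = y.1.2.2 →
      entryLE (T x) (T y)
  col_strict : ∀ x y : {x : Box r m // D x},
    x.1.1 = y.1.1 → (x.1.2.1 : ℕ) + 1 = (y.1.2.1 : ℕ) → x.1.2.2 = y.1.2.2 →
      entryLT (T x) (T y)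
  weight : ∀ e : Entry r m, mu e.1 e.2 = Nat.card {x : {x : Box r m // D x} // T x = e}

/-- Singularity of a tableau: every prefix of the component-`c` reading word has
weakly decreasing content, for every `c`. -/
def IsSingular (D : Box r m → Prop) (T : {x : Box r m // D x} → Entry r m) : Prop :=
  ∀ (b : {x : Box r m // D x}) (a : ℕ),
    Nat.card {y : {x : Box r m // D x} //
        (T y).1 = (T b).1 ∧ BoxGE y.1 b.1 ∧ ((T y).2 : ℕ) = a + 1} ≤
      Nat.card {y : {x : Box r m // D x} //
        (T y).1 = (T b).1 ∧ BoxGE y.1 b.1 ∧ ((T y).2 : ℕ) = a}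

/-- The number of semistandard tableaux on the boxes `D` with weight `mu`. -/
noncomputable def nSST (D : Box r m → Prop) (mu : MComp r m) : ℕ :=
  Nat.card {T : {x : Box r m // D x} → Entry r m // IsSST D mu T}

/-- The number of singular semistandard tableaux on the boxes `D` with weight `mu`. -/
noncomputable def nSingSST (D : Box r m → Prop) (mu : MComp r m) : ℕ :=
  Nat.card {T : {x : Box r m // D x} → Entry r m // IsSST D mu T ∧ IsSingular D T}

/-- `#CT₀(λ,μ)`: the number of semistandard tableaux of shape `λ` and weight `μ`. -/
noncomputable def nCT (lam mu : MComp r m) : ℕ := nSST (InDiag lam) mu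

/-- `β_{λμ}`: the number of singular semistandard tableaux of shape `λ` and weight `μ`. -/
noncomputable def beta (lam mu : MComp r m) : ℕ := nSingSST (InDiag lam) mu


/-- The Kostka number `K_{ν μ}`: the number of ordinary semistandard Young
tableaux of shape `ν` (rows indexed by `ℕ`) and weight `μ` (a finite sequence of
nonnegative integers, indexed by the linearly ordered alphabet `ι`). -/
noncomputable def kostka (nu : ℕ → ℕ) {ι : Type} [LinearOrder ι] (mu : ι → ℕ) : ℕ :=
  Nat.card {T : {x : ℕ × ℕ // x.2 < nu x.1} → ι //
    (∀ x y : {x : ℕ × ℕ // x.2 < nu x.1}, x.1.1 = y.1.1 → x.1.2 + 1 = y.1.2 → T x ≤ T y) ∧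
    (∀ x y : {x : ℕ × ℕ // x.2 < nu x.1}, x.1.1 + 1 = y.1.1 → x.1.2 = y.1.2 → T x < T y) ∧
    (∀ a : ι, mu a = Nat.card {x : {x : ℕ × ℕ // x.2 < nu x.1} // T x = a})}

/-- Extension of a finite tuple by zeros. -/
def extF {L : ℕ} (f : Fin L → ℕ) : ℕ → ℕ := fun i => if h : i < L then f ⟨i, h⟩ else 0

/-- The Schur polynomial of the partition `ν` (of size `d`) in `N` variables:
`s_ν(x_1,…,x_N) = ∑_μ K_{νμ} x^μ`. -/
noncomputable def schurP (N d : ℕ) (nu : ℕ → ℕ) : MvPolynomial (Fin N) ℤ :=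
  ∑ f ∈ (Fintype.piFinset fun _ : Fin N => Finset.range (d + 1)) |>.filter
      (fun f => ∑ i, f i = d),
    (kostka nu f : ℤ) • MvPolynomial.monomial (Finsupp.equivFunOnFinite.symm f) 1

/-- `lr` is the family of Littlewood–Richardson coefficients: for all partitions
`α`, `β`, the product of the Schur polynomials `s_α s_β` (in any number `N` of
variables containing the supports) equals `∑_γ lr α β γ • s_γ`, the sum running
over all partitions `γ` of size `|α| + |β|` with at most `N` parts. -/
noncomputable def IsLR (lr : (ℕ → ℕ) → (ℕ → ℕ) → (ℕ → ℕ) → ℕ) : Prop :=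
  ∀ (N : ℕ) (al be : ℕ → ℕ), Antitone al → Antitone be →
    (∀ i, N ≤ i → al i = 0) → (∀ i, N ≤ i → be i = 0) →
    schurP N (∑ i ∈ Finset.range N, al i) al *
        schurP N (∑ i ∈ Finset.range N, be i) be =
      ∑ g ∈ (Fintype.piFinset fun _ : Fin N =>
            Finset.range ((∑ i ∈ Finset.range N, al i) + (∑ i ∈ Finset.range N, be i) + 1)) |>.filter
          (fun g => (∀ i j : Fin N, i ≤ j → g j ≤ g i) ∧
            ∑ i, g i = (∑ i ∈ Finset.range N, al i) + (∑ i ∈ Finset.range N, be i)),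
        (lr al be (extF g) : ℤ) •
          schurP N ((∑ i ∈ Finset.range N, al i) + (∑ i ∈ Finset.range N, be i)) (extF g)

/-- The polynomial `tS_λ(x) = ∑_μ #CT₀(λ,μ) x^μ`, summed over all
`r`-compositions `μ` of size `d`, in the variables `x^{(k)}_i`. -/
noncomputable def tS (d : ℕ) (lam : MComp r m) : MvPolynomial (Entry r m) ℤ :=
  ∑ f ∈ (Fintype.piFinset fun _ : Entry r m => Finset.range (d + 1)) |>.filter
      (fun f => ∑ e, f e = d),
    (nCT lam (fun k i => f ⟨k, i⟩) : ℤ) •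
      MvPolynomial.monomial (Finsupp.equivFunOnFinite.symm f) 1

/-- `S_μ(x) = ∏_k s_{μ^{(k)}}(x^{(k)})`, the product of Schur polynomials. -/
noncomputable def SchurProd (mu : MComp r m) : MvPolynomial (Entry r m) ℤ :=
  ∏ k : Fin r, MvPolynomial.rename (fun i : Fin (m k) => (⟨k, i⟩ : Entry r m))
    (schurP (m k) (∑ i, mu k i) (extF (mu k)))

/-- Membership in `Θ(λ,μ)`: a chain `λ = λ_{⟨r⟩} ⊇ … ⊇ λ_{⟨0⟩} = ∅` of
`r`-partitions with `(λ_{⟨k⟩})^{(k+1)} = ∅` for `1 ≤ k ≤ r-1` and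
`|λ_{⟨k⟩}| - |λ_{⟨k-1⟩}| = |μ^{(k)}|` for `1 ≤ k ≤ r`. -/
def IsTheta (lam mu : MComp r m) (L : Fin (r + 1) → MComp r m) : Prop :=
  (∀ κ, IsMPartition (L κ)) ∧
  L (Fin.last r) = lam ∧
  (∀ (c : Fin r) (i : Fin (m c)), L 0 c i = 0) ∧
  (∀ (k : Fin r) (c : Fin r) (i : Fin (m c)), L k.castSucc c i ≤ L k.succ c i) ∧
  (∀ (k : ℕ) (h : k < r), 1 ≤ k →
    ∀ i : Fin (m ⟨k, h⟩), L ⟨k, Nat.lt_succ_of_lt h⟩ ⟨k, h⟩ i = 0) ∧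
  (∀ k : Fin r, size (L k.succ) = size (L k.castSucc) + ∑ i, mu k i)

/-- The multicomposition `(∅, …, ∅, w, ∅, …, ∅)` concentrated in component `k`. -/
def unitWeight (k : Fin r) (w : Fin (m k) → ℕ) : MComp r m :=
  fun c i => if h : c = k then w (Fin.cast (congrArg m h) i) else 0

/-- The index in `Fin r` of the `j`-th member of the `k`-th block, for blocks of
sizes `rs 0, …, rs (g-1)` with `∑ rs = r`. -/
def blockIdx {g : ℕ} (rs : Fin g → ℕ) (hsum : ∑ l, rs l = r) (k : Fin g) (j : Fin (rs k)) :
    Fin r :=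
  ⟨(∑ l ∈ Finset.univ.filter (fun l => l < k), rs l) + j, by
    classical
    have hj := j.isLt
    have h1 : (∑ l ∈ Finset.univ.filter (fun l => l < k), rs l) + rs k ≤ ∑ l, rs l := by
      have hk : k ∉ Finset.univ.filter (fun l => l < k) := by simp
      have h2 : (∑ l ∈ insert k (Finset.univ.filter (fun l => l < k)), rs l)
          = (∑ l ∈ Finset.univ.filter (fun l => l < k), rs l) + rs k := by
        rw [Finset.sum_insert hk]; ring
      rw [← h2]
      exact Finset.sum_le_sum_of_subset (Finset.subset_univ _)
    omega⟩

/-- The permutation of the variables `x^{(k)}_i` within the `k`-th set induced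
by `σ ∈ S_{m_k}`. -/
def blockPermFun (k : Fin r) (sg : Equiv.Perm (Fin (m k))) : Entry r m → Entry r m :=
  fun e => if h : e.1 = k then ⟨k, sg (Fin.cast (congrArg m h) e.2)⟩ else e

lemma box_ext (x y : Box r m) (h1 : (x.1 : ℕ) = (y.1 : ℕ))
    (h2 : (x.2.1 : ℕ) = (y.2.1 : ℕ)) (h3 : x.2.2 = y.2.2) : x = y := by
  obtain ⟨k, i, j⟩ := x
  obtain ⟨k', i', j'⟩ := y
  simp only at h1 h2 h3
  have hk : k = k' := Fin.ext h1
  subst hk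
  have hi : i = i' := Fin.ext h2
  subst hi; subst h3; rfl

lemma entry_ext (e f : Entry r m) (h1 : (e.1 : ℕ) = (f.1 : ℕ))
    (h2 : (e.2 : ℕ) = (f.2 : ℕ)) : e = f := by
  obtain ⟨c, a⟩ := e
  obtain ⟨c', a'⟩ := f
  simp only at h1 h2
  have hc : c = c' := Fin.ext h1
  subst hc
  have ha : a = a' := Fin.ext h2
  subst ha; rfl

lemma part_le_size (lam : MComp r m) (k : Fin r) (i : Fin (m k)) :
    lam k i ≤ size lam := by
  have h1 : lam k i ≤ ∑ j, lam k j :=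
    Finset.single_le_sum (fun j _ => Nat.zero_le _) (Finset.mem_univ i)
  exact h1.trans (Finset.single_le_sum (f := fun k => ∑ j, lam k j)
    (fun j _ => Nat.zero_le _) (Finset.mem_univ k))

lemma diag_finite (lam : MComp r m) : Finite {x : Box r m // InDiag lam x} := by
  refine Finite.of_injective
    (fun x => (⟨x.1.1, (x.1.2.1, ⟨x.1.2.2, ?_⟩)⟩ :
      Σ k : Fin r, Fin (m k) × Fin (size lam + 1))) ?_
  · exact lt_of_lt_of_le x.2 (Nat.le_succ_of_le (part_le_size lam _ _))
  · intro a b hab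
    simp only [Sigma.mk.inj_iff] at hab
    obtain ⟨h1, h2⟩ := hab
    refine Subtype.ext (box_ext _ _ (congrArg Fin.val h1) ?_ ?_)
    · have hk : a.1.1 = b.1.1 := h1
      obtain ⟨⟨k, i, j⟩, ha⟩ := a
      obtain ⟨⟨k', i', j'⟩, hb⟩ := b
      simp only at hk
      subst hk
      simp only [heq_eq_eq, Prod.mk.injEq] at h2
      exact congrArg Fin.val h2.1
    · obtain ⟨⟨k, i, j⟩, ha⟩ := a
      obtain ⟨⟨k', i', j'⟩, hb⟩ := b
      have hk : k = k' := h1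
      subst hk
      simp only [heq_eq_eq, Prod.mk.injEq, Fin.mk.injEq] at h2
      exact h2.2

lemma card_le_one_of_subsingleton (α : Type*) [Subsingleton α] : Nat.card α ≤ 1 := by
  cases isEmpty_or_nonempty α
  · simp
  · exact le_of_eq (Nat.card_eq_one_iff_unique.mpr ⟨‹_›, ‹_›⟩)

lemma sum_ite_lt_fin (M c : ℕ) (hc : c ≤ M) :
    (∑ j : Fin M, if (j : ℕ) < c then 1 else 0) = c := by
  rw [Fin.sum_univ_eq_sum_range (fun j => if j < c then 1 else 0) M]
  rw [← Finset.sum_subset (Finset.range_subset_range.mpr hc)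
      (fun x _ hx => if_neg (by simp only [Finset.mem_range, not_lt] at hx; omega))]
  calc ∑ j ∈ Finset.range c, (if j < c then 1 else 0)
      = ∑ j ∈ Finset.range c, 1 :=
        Finset.sum_congr rfl (fun x hx => if_pos (Finset.mem_range.mp hx))
    _ = c := by simp

lemma strict_chain_gap (nn : ℕ) (g : ℕ → ℕ)
    (hstep : ∀ t, t + 1 < nn → g t < g (t + 1)) :
    ∀ d s, s + d < nn → g s + d ≤ g (s + d) := by
  intro d
  induction d with
  | zero => intro s _; simp
  | succ d ih =>
    intro s hs
    have h1 : g s + d ≤ g (s + d) := ih s (by omega)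
    have h2 : g (s + d) < g (s + d + 1) := hstep (s + d) (by omega)
    show g s + (d + 1) ≤ g (s + d + 1)
    omega

lemma strict_chain_id (nn : ℕ) (g : ℕ → ℕ)
    (hstep : ∀ t, t + 1 < nn → g t < g (t + 1))
    (hlt : ∀ t, t < nn → g t < nn) :
    ∀ t, t < nn → g t = t := by
  intro t ht
  have h1 : g 0 + t ≤ g (0 + t) := strict_chain_gap nn g hstep t 0 (by omega)
  have h2 : g t + (nn - 1 - t) ≤ g (t + (nn - 1 - t)) :=
    strict_chain_gap nn g hstep (nn - 1 - t) t (by omega)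
  have h3 : t + (nn - 1 - t) = nn - 1 := by omega
  rw [h3] at h2
  have h4 : g (nn - 1) < nn := hlt _ (by omega)
  simp only [Nat.zero_add] at h1
  omega

lemma antitone_binary_indicator {M : ℕ} (g : Fin M → ℕ) (hg : Antitone g)
    (hb : ∀ i, g i ≤ 1) (i : Fin M) :
    g i = if (i : ℕ) < ∑ j, g j then 1 else 0 := by
  set S := ∑ j, g j with hS
  split_ifs with h
  · -- i < S; show g i = 1
    by_contra hne
    have hgi : g i = 0 := by have := hb i; omega
    have hzero : ∀ j : Fin M, (i : ℕ) ≤ (j : ℕ) → g j = 0 := by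
      intro j hj
      have := hg (show i ≤ j from hj)
      omega
    have hle : S ≤ ∑ j : Fin M, if (j : ℕ) < (i : ℕ) then 1 else 0 := by
      apply Finset.sum_le_sum
      intro j _
      by_cases hj : (j : ℕ) < (i : ℕ)
      · simp [hj]; exact hb j
      · simp [hj]; exact hzero j (by omega)
    rw [sum_ite_lt_fin M i (le_of_lt i.isLt)] at hle
    omega
  · -- S ≤ i; show g i = 0
    by_contra hne
    have hgi : g i = 1 := by have := hb i; omega
    have hone : ∀ j : Fin M, (j : ℕ) ≤ (i : ℕ) → 1 ≤ g j := by
      intro j hj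
      have := hg (show j ≤ i from hj)
      omega
    have hge : (∑ j : Fin M, if (j : ℕ) < (i : ℕ) + 1 then 1 else 0) ≤ S := by
      apply Finset.sum_le_sum
      intro j _
      by_cases hj : (j : ℕ) < (i : ℕ) + 1
      · simp [hj]; exact hone j (by omega)
      · simp [hj]
    rw [sum_ite_lt_fin M ((i : ℕ) + 1) i.isLt] at hge
    omega
lemma boxGE_def (x y : Box r m) : BoxGE x y ↔
    ((y.1 : ℕ) < (x.1 : ℕ) ∨
      ((x.1 : ℕ) = (y.1 : ℕ) ∧
        (y.2.2 < x.2.2 ∨ (x.2.2 = y.2.2 ∧ (x.2.1 : ℕ) ≤ (y.2.1 : ℕ))))) := Iff.rfl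

lemma boxGE_refl (x : Box r m) : BoxGE x x :=
  Or.inr ⟨rfl, Or.inr ⟨rfl, le_refl _⟩⟩

lemma entryLE_def (e f : Entry r m) : entryLE e f ↔
    ((e.1 : ℕ) < (f.1 : ℕ) ∨ ((e.1 : ℕ) = (f.1 : ℕ) ∧ (e.2 : ℕ) ≤ (f.2 : ℕ))) := Iff.rfl

lemma entryLT_def (e f : Entry r m) : entryLT e f ↔
    ((e.1 : ℕ) < (f.1 : ℕ) ∨ ((e.1 : ℕ) = (f.1 : ℕ) ∧ (e.2 : ℕ) < (f.2 : ℕ))) := Iff.rfl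
set_option maxHeartbeats 1000000 in
/-- For `μ = (∅, …, ∅, (1^n))`: `β_{λμ} = 1` if `λ = ((1^{n₁}), …, (1^{n_r}))`
with `n₁ + … + n_r = n`, and `β_{λμ} = 0` otherwise. -/
theorem beta_column_last (r n : ℕ) (hr : 1 ≤ r) (m : Fin r → ℕ) (hm : ∀ k, n ≤ m k)
    (mu : MComp r m)
    (hmudef : ∀ k i, mu k i = if (k : ℕ) = r - 1 ∧ (i : ℕ) < n then 1 else 0)
    (lam : MComp r m) (hlam : IsMPartition lam) (hlams : size lam = n) :
    ((∃ ns : Fin r → ℕ, (∑ k, ns k = n) ∧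
        ∀ k i, lam k i = if (i : ℕ) < ns k then 1 else 0) → beta lam mu = 1) ∧
    ((¬ ∃ ns : Fin r → ℕ, (∑ k, ns k = n) ∧
        ∀ k i, lam k i = if (i : ℕ) < ns k then 1 else 0) → beta lam mu = 0) := by
  classical
  haveI hfin : Finite {x : Box r m // InDiag lam x} := diag_finite lam
  have hr1 : r - 1 < r := by omega
  -- Facts about any semistandard tableau with weight mu
  have key_facts : ∀ T : {x : Box r m // InDiag lam x} → Entry r m, IsSST (InDiag lam) mu T →
      (∀ z, ((T z).1 : ℕ) = r - 1) ∧ (∀ z, ((T z).2 : ℕ) < n) ∧ Function.Injective T := by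
    intro T hT
    have hcard1 : ∀ z, Nat.card {x : {x : Box r m // InDiag lam x} // T x = T z} = 1 ∧
        ((T z).1 : ℕ) = r - 1 ∧ ((T z).2 : ℕ) < n := by
      intro z
      have hpos : 0 < Nat.card {x : {x : Box r m // InDiag lam x} // T x = T z} := by
        haveI : Nonempty {x : {x : Box r m // InDiag lam x} // T x = T z} := ⟨⟨z, rfl⟩⟩
        exact Nat.card_pos
      have hw := hT.weight (T z)
      rw [hmudef] at hw
      by_cases hcond : ((T z).1 : ℕ) = r - 1 ∧ ((T z).2 : ℕ) < n
      · rw [if_pos hcond] at hw; exact ⟨hw.symm, hcond⟩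
      · rw [if_neg hcond] at hw; omega
    refine ⟨fun z => (hcard1 z).2.1, fun z => (hcard1 z).2.2, ?_⟩
    intro z z' hzz
    have h1 := (hcard1 z').1
    rw [Nat.card_eq_one_iff_unique] at h1
    haveI := h1.1
    have heq : (⟨z, hzz⟩ : {x : {x : Box r m // InDiag lam x} // T x = T z'}) = ⟨z', rfl⟩ :=
      Subsingleton.elim _ _
    exact congrArg Subtype.val heq
  constructor
  · -- Part A
    rintro ⟨ns, hsum, hcol⟩
    have hnsle : ∀ k, ns k ≤ n := fun k =>
      hsum ▸ Finset.single_le_sum (fun _ _ => Nat.zero_le _) (Finset.mem_univ k)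
    obtain ⟨o, ho⟩ : ∃ o' : ℕ → ℕ,
        o' = fun t => ∑ k : Fin r, (if (k : ℕ) < t then ns k else 0) := ⟨_, rfl⟩
    have homono : Monotone o := by
      intro a b hab
      rw [ho]
      apply Finset.sum_le_sum
      intro k _
      split_ifs <;> omega
    have hor : o r = n := by
      rw [ho]
      rw [← hsum]
      exact Finset.sum_congr rfl (fun k _ => if_pos k.isLt)
    have hosucc : ∀ k : Fin r, o ((k : ℕ) + 1) = o (k : ℕ) + ns k := by
      intro k
      have hsplit : ∀ k' : Fin r, (if (k' : ℕ) < (k : ℕ) + 1 then ns k' else 0)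
          = (if (k' : ℕ) < (k : ℕ) then ns k' else 0) + (if k' = k then ns k' else 0) := by
        intro k'
        rcases eq_or_ne k' k with rfl | hne
        · simp
        · have hv : (k' : ℕ) ≠ (k : ℕ) := fun h => hne (Fin.ext h)
          rw [if_neg hne]
          split_ifs <;> omega
      simp only [ho]
      rw [Finset.sum_congr rfl (fun k' _ => hsplit k'), Finset.sum_add_distrib]
      congr 1
      rw [Finset.sum_ite_eq' Finset.univ k ns]
      simp
    have honle : ∀ t, t ≤ r → o t ≤ n := fun t ht => hor ▸ homono ht
    have hjlt : ∀ z : {x : Box r m // InDiag lam x},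
        (z.1.2.1 : ℕ) < ns z.1.1 ∧ z.1.2.2 = 0 := by
      intro z
      have hz : z.1.2.2 < lam z.1.1 z.1.2.1 := z.2
      rw [hcol] at hz
      split_ifs at hz with h
      · exact ⟨h, by omega⟩
      · omega
    obtain ⟨key, hkey⟩ : ∃ f : {x : Box r m // InDiag lam x} → ℕ,
        f = fun z => n - o ((z.1.1 : ℕ) + 1) + (z.1.2.1 : ℕ) := ⟨_, rfl⟩
    have hklt : ∀ z, key z < n := by
      intro z
      obtain ⟨hi, hj⟩ := hjlt z
      have h1 := hosucc z.1.1
      have h3 : o ((z.1.1 : ℕ) + 1) ≤ n := honle _ (by have := z.1.1.isLt; omega)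
      simp only [hkey]
      omega
    have hBG : ∀ z z' : {x : Box r m // InDiag lam x},
        BoxGE z.1 z'.1 ↔ key z ≤ key z' := by
      intro z z'
      obtain ⟨hi, hj⟩ := hjlt z
      obtain ⟨hi', hj'⟩ := hjlt z'
      have h1 := hosucc z.1.1
      have h2 := hosucc z'.1.1
      have h3 : o ((z.1.1 : ℕ) + 1) ≤ n := honle _ (by have := z.1.1.isLt; omega)
      have h4 : o ((z'.1.1 : ℕ) + 1) ≤ n := honle _ (by have := z'.1.1.isLt; omega)
      rw [boxGE_def]
      rw [hj, hj']
      simp only [hkey]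
      constructor
      · intro hB
        rcases hB with h | ⟨hKK, h⟩
        · have h5 : o ((z'.1.1 : ℕ) + 1) ≤ o (z.1.1 : ℕ) := homono (by omega)
          omega
        · have h6 : o ((z.1.1 : ℕ) + 1) = o ((z'.1.1 : ℕ) + 1) := by rw [hKK]
          omega
      · intro hk
        rcases Nat.lt_trichotomy (z.1.1 : ℕ) (z'.1.1 : ℕ) with h | h | h
        · have h5 : o ((z.1.1 : ℕ) + 1) ≤ o (z'.1.1 : ℕ) := homono (by omega)
          exfalso; omega
        · have h6 : o ((z.1.1 : ℕ) + 1) = o ((z'.1.1 : ℕ) + 1) := by rw [h]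
          right
          refine ⟨h, Or.inr ⟨by trivial, by omega⟩⟩
        · left; exact h
    have hkeyinj : Function.Injective key := by
      intro z z' hzz
      have h1 := (hBG z z').mpr (le_of_eq hzz)
      have h2 := (hBG z' z).mpr (le_of_eq hzz.symm)
      obtain ⟨hi, hj⟩ := hjlt z
      obtain ⟨hi', hj'⟩ := hjlt z'
      rw [boxGE_def] at h1 h2
      rw [hj, hj'] at h1 h2
      have hK : (z.1.1 : ℕ) = (z'.1.1 : ℕ) := by
        rcases h1 with h1a | ⟨h1a, _⟩ <;> rcases h2 with h2a | ⟨h2a, _⟩ <;> omega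
      have hI : (z.1.2.1 : ℕ) = (z'.1.2.1 : ℕ) := by
        rcases h1 with h1a | ⟨h1a, h1b⟩ <;> rcases h2 with h2a | ⟨h2a, h2b⟩
        · omega
        · omega
        · omega
        · rcases h1b with hb | ⟨_, hb⟩ <;> rcases h2b with hb' | ⟨_, hb'⟩ <;> omega
      exact Subtype.ext (box_ext _ _ hK hI (by omega))
    have hnm : ∀ k : Fin r, ns k ≤ m k := fun k => (hnsle k).trans (hm k)
    have hcardD : Nat.card {x : Box r m // InDiag lam x} = n := by
      have E : (Σ k : Fin r, Fin (ns k)) ≃ {x : Box r m // InDiag lam x} :=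
        { toFun := fun p => ⟨⟨p.1, (⟨(p.2 : ℕ), lt_of_lt_of_le p.2.isLt (hnm p.1)⟩, 0)⟩, by
            show (0 : ℕ) < lam p.1 _
            rw [hcol]
            simp [p.2.isLt]⟩
          invFun := fun z => ⟨z.1.1, ⟨(z.1.2.1 : ℕ), (hjlt z).1⟩⟩
          left_inv := by rintro ⟨k, i⟩; rfl
          right_inv := fun z => Subtype.ext (box_ext _ _ rfl rfl (hjlt z).2.symm) }
      rw [← Nat.card_congr E, Nat.card_eq_fintype_card, Fintype.card_sigma]
      simp [hsum]
    have hkeybij : Function.Bijective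
        (fun z : {x : Box r m // InDiag lam x} => (⟨key z, hklt z⟩ : Fin n)) := by
      rw [Nat.bijective_iff_injective_and_card]
      constructor
      · intro z z' h
        exact hkeyinj (congrArg Fin.val h)
      · rw [hcardD, Nat.card_eq_fintype_card, Fintype.card_fin]
    set T0 : {x : Box r m // InDiag lam x} → Entry r m :=
      fun z => ⟨⟨r - 1, hr1⟩, ⟨key z, lt_of_lt_of_le (hklt z) (hm ⟨r - 1, hr1⟩)⟩⟩ with hT0
    have hT0comp : ∀ z, ((T0 z).1 : ℕ) = r - 1 := fun z => by simp only [hT0]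
    have hT0let : ∀ z, ((T0 z).2 : ℕ) = key z := fun z => rfl
    have hT0SST : IsSST (InDiag lam) mu T0 := by
      constructor
      · intro x
        rw [hT0comp x]
        have := x.1.1.isLt
        omega
      · intro x y hk hi hj
        exfalso
        have := (hjlt y).2
        omega
      · intro x y hk hi hj
        rw [entryLT_def]
        right
        refine ⟨by simp only [hT0comp], ?_⟩
        rw [hT0let, hT0let]
        have h6 : o ((x.1.1 : ℕ) + 1) = o ((y.1.1 : ℕ) + 1) := by rw [hk]
        have h3 : o ((x.1.1 : ℕ) + 1) ≤ n := honle _ (by have := x.1.1.isLt; omega)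
        simp only [hkey]
        omega
      · intro e
        obtain ⟨c, a⟩ := e
        rw [hmudef]
        by_cases hcond : (c : ℕ) = r - 1 ∧ (a : ℕ) < n
        · rw [if_pos hcond]
          symm
          rw [Nat.card_eq_one_iff_unique]
          constructor
          · constructor
            rintro ⟨z, hz⟩ ⟨z', hz'⟩
            have e1 : ((T0 z).2 : ℕ) = (a : ℕ) :=
              congrArg (fun e : Entry r m => (e.2 : ℕ)) hz
            have e2 : ((T0 z').2 : ℕ) = (a : ℕ) :=
              congrArg (fun e : Entry r m => (e.2 : ℕ)) hz'
            rw [hT0let] at e1 e2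
            exact Subtype.ext (hkeyinj (e1.trans e2.symm))
          · obtain ⟨z, hz⟩ := hkeybij.2 ⟨(a : ℕ), hcond.2⟩
            have hzv : key z = (a : ℕ) := congrArg Fin.val hz
            exact ⟨⟨z, entry_ext _ _ (by rw [hT0comp]; exact hcond.1.symm)
              (by rw [hT0let]; exact hzv)⟩⟩
        · rw [if_neg hcond]
          haveI : IsEmpty {x : {x : Box r m // InDiag lam x} // T0 x = ⟨c, a⟩} := by
            constructor
            rintro ⟨z, hz⟩
            apply hcond
            have e1 : ((T0 z).1 : ℕ) = (c : ℕ) :=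
              congrArg (fun e : Entry r m => (e.1 : ℕ)) hz
            have e2 : ((T0 z).2 : ℕ) = (a : ℕ) :=
              congrArg (fun e : Entry r m => (e.2 : ℕ)) hz
            rw [hT0comp] at e1
            rw [hT0let] at e2
            exact ⟨e1.symm, e2 ▸ hklt z⟩
          exact (Nat.card_of_isEmpty).symm
    have hT0sing : IsSingular (InDiag lam) T0 := by
      intro b a
      by_cases hcase : a + 1 ≤ key b
      · have han : a + 1 < n := lt_of_le_of_lt hcase (hklt b)
        haveI hsub : Subsingleton {y : {x : Box r m // InDiag lam x} //
            (T0 y).1 = (T0 b).1 ∧ BoxGE y.1 b.1 ∧ ((T0 y).2 : ℕ) = a + 1} := by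
          constructor
          rintro ⟨y, _, _, hy3⟩ ⟨y', _, _, hy3'⟩
          apply Subtype.ext
          apply hkeyinj
          rw [hT0let] at hy3 hy3'
          rw [hy3, hy3']
        have hle1 : Nat.card {y : {x : Box r m // InDiag lam x} //
            (T0 y).1 = (T0 b).1 ∧ BoxGE y.1 b.1 ∧ ((T0 y).2 : ℕ) = a + 1} ≤ 1 :=
          card_le_one_of_subsingleton _
        obtain ⟨z, hz⟩ := hkeybij.2 ⟨a, by omega⟩
        have hzv : key z = a := congrArg Fin.val hz
        haveI : Nonempty {y : {x : Box r m // InDiag lam x} //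
            (T0 y).1 = (T0 b).1 ∧ BoxGE y.1 b.1 ∧ ((T0 y).2 : ℕ) = a} :=
          ⟨⟨z, by simp only [hT0], (hBG z b).mpr (by omega), by rw [hT0let]; exact hzv⟩⟩
        have hge1 : 0 < Nat.card {y : {x : Box r m // InDiag lam x} //
            (T0 y).1 = (T0 b).1 ∧ BoxGE y.1 b.1 ∧ ((T0 y).2 : ℕ) = a} := Nat.card_pos
        omega
      · haveI : IsEmpty {y : {x : Box r m // InDiag lam x} //
            (T0 y).1 = (T0 b).1 ∧ BoxGE y.1 b.1 ∧ ((T0 y).2 : ℕ) = a + 1} := by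
          constructor
          rintro ⟨y, _, hy2, hy3⟩
          have := (hBG y b).mp hy2
          rw [hT0let] at hy3
          omega
        rw [Nat.card_of_isEmpty]
        exact Nat.zero_le _
    have huniq : ∀ T : {x : Box r m // InDiag lam x} → Entry r m,
        IsSST (InDiag lam) mu T → IsSingular (InDiag lam) T → T = T0 := by
      intro T hT hsing
      obtain ⟨hcomp, hlt, hinj⟩ := key_facts T hT
      have hletinj : ∀ z z' : {x : Box r m // InDiag lam x},
          ((T z).2 : ℕ) = ((T z').2 : ℕ) → z = z' := fun z z' h =>
        hinj (entry_ext _ _ (by rw [hcomp z, hcomp z']) h)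
      have hlbij : Function.Bijective
          (fun z : {x : Box r m // InDiag lam x} => (⟨((T z).2 : ℕ), hlt z⟩ : Fin n)) := by
        rw [Nat.bijective_iff_injective_and_card]
        refine ⟨fun z z' h => hletinj z z' (congrArg Fin.val h),
          by rw [hcardD, Nat.card_eq_fintype_card, Fintype.card_fin]⟩
      obtain ⟨w, hwl⟩ : ∃ w : Fin n → {x : Box r m // InDiag lam x},
          ∀ t, ((T (w t)).2 : ℕ) = (t : ℕ) :=
        ⟨(Equiv.ofBijective _ hlbij).symm, fun t =>
          congrArg Fin.val ((Equiv.ofBijective _ hlbij).apply_symm_apply t)⟩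
      have hchain : ∀ (t : ℕ) (h1 : t < n) (h : t + 1 < n),
          BoxGE (w ⟨t, h1⟩).1 (w ⟨t + 1, h⟩).1 := by
        intro t h1 h
        have hs := hsing (w ⟨t + 1, h⟩) t
        have hne : 0 < Nat.card {y : {x : Box r m // InDiag lam x} //
            (T y).1 = (T (w ⟨t + 1, h⟩)).1 ∧ BoxGE y.1 (w ⟨t + 1, h⟩).1 ∧
              ((T y).2 : ℕ) = t + 1} := by
          haveI : Nonempty {y : {x : Box r m // InDiag lam x} //
              (T y).1 = (T (w ⟨t + 1, h⟩)).1 ∧ BoxGE y.1 (w ⟨t + 1, h⟩).1 ∧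
                ((T y).2 : ℕ) = t + 1} :=
            ⟨⟨w ⟨t + 1, h⟩, rfl, boxGE_refl _, hwl ⟨t + 1, h⟩⟩⟩
          exact Nat.card_pos
        have hpos : 0 < Nat.card {y : {x : Box r m // InDiag lam x} //
            (T y).1 = (T (w ⟨t + 1, h⟩)).1 ∧ BoxGE y.1 (w ⟨t + 1, h⟩).1 ∧
              ((T y).2 : ℕ) = t} := lt_of_lt_of_le hne hs
        obtain ⟨⟨y, _, hy2, hy3⟩⟩ := (Nat.card_pos_iff.mp hpos).1
        have hyw : y = w ⟨t, h1⟩ := hletinj _ _ (by rw [hwl]; exact hy3)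
        rw [← hyw]
        exact hy2
      have hgid : ∀ t : Fin n, key (w t) = (t : ℕ) := by
        obtain ⟨g, hg⟩ : ∃ g' : ℕ → ℕ,
            g' = fun t => if h : t < n then key (w ⟨t, h⟩) else 0 := ⟨_, rfl⟩
        have hstep : ∀ t, t + 1 < n → g t < g (t + 1) := by
          intro t h
          have htn : t < n := by omega
          have hb := hchain t htn h
          have hle := (hBG _ _).mp hb
          have hne : w ⟨t, htn⟩ ≠ w ⟨t + 1, h⟩ := by
            intro hww
            have h5 := hwl (⟨t, htn⟩ : Fin n)
            rw [hww, hwl] at h5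
            simp at h5
          have hne2 : key (w ⟨t, htn⟩) ≠ key (w ⟨t + 1, h⟩) := fun hq =>
            hne (hkeyinj hq)
          simp only [hg]
          rw [dif_pos htn, dif_pos h]
          omega
        have hglt : ∀ t, t < n → g t < n := by
          intro t ht
          simp only [hg]
          rw [dif_pos ht]
          exact hklt _
        have hid := strict_chain_id n g hstep hglt
        intro t
        have h2 := hid (t : ℕ) t.isLt
        simp only [hg] at h2
        rw [dif_pos t.isLt] at h2
        simpa using h2
      funext z
      have hz : z = w ⟨((T z).2 : ℕ), hlt z⟩ :=
        hletinj _ _ (by rw [hwl])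
      have hkz : key z = ((T z).2 : ℕ) := by
        conv_lhs => rw [hz]
        exact hgid _
      apply entry_ext
      · rw [hcomp z, hT0comp]
      · rw [hT0let, hkz]
    unfold beta nSingSST
    rw [Nat.card_eq_one_iff_unique]
    refine ⟨⟨?_⟩, ⟨⟨T0, hT0SST, hT0sing⟩⟩⟩
    rintro ⟨T, hT, hs⟩ ⟨T', hT', hs'⟩
    exact Subtype.ext ((huniq T hT hs).trans (huniq T' hT' hs').symm)
  · -- Part B
    intro hno
    have hbig : ∃ (k : Fin r) (i : Fin (m k)), 2 ≤ lam k i := by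
      by_contra hle
      push_neg at hle
      apply hno
      refine ⟨fun k => ∑ i, lam k i, hlams, ?_⟩
      intro k i
      exact antitone_binary_indicator (lam k) (hlam k)
        (fun i => by have := hle k i; omega) i
    obtain ⟨k, i, hki⟩ := hbig
    unfold beta nSingSST
    haveI : IsEmpty {T : {x : Box r m // InDiag lam x} → Entry r m //
        IsSST (InDiag lam) mu T ∧ IsSingular (InDiag lam) T} := by
      constructor
      rintro ⟨T, hT, hsing⟩
      obtain ⟨hcomp, hlt, hinj⟩ := key_facts T hT
      set xB : {x : Box r m // InDiag lam x} :=
        ⟨⟨k, (i, 1)⟩, show (1 : ℕ) < lam k i from hki⟩ with hxB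
      set yB : {x : Box r m // InDiag lam x} :=
        ⟨⟨k, (i, 0)⟩, show (0 : ℕ) < lam k i from by omega⟩ with hyB
      have hrow : entryLE (T yB) (T xB) := hT.row_weak yB xB rfl rfl rfl
      rw [entryLE_def] at hrow
      have hcy := hcomp yB
      have hcx := hcomp xB
      have hayx : ((T yB).2 : ℕ) ≤ ((T xB).2 : ℕ) := by
        rcases hrow with h | ⟨_, h⟩
        · omega
        · exact h
      have hne : T yB ≠ T xB := by
        intro hEq
        have := hinj hEq
        have hj := congrArg (fun z : {x : Box r m // InDiag lam x} => z.1.2.2) this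
        have hx2 : xB.1.2.2 = 1 := rfl
        have hy2 : yB.1.2.2 = 0 := rfl
        omega
      have hstrict : ((T yB).2 : ℕ) < ((T xB).2 : ℕ) := by
        rcases Nat.lt_or_ge ((T yB).2 : ℕ) ((T xB).2 : ℕ) with h | h
        · exact h
        · exfalso
          exact hne (entry_ext _ _ (by omega) (by omega))
      set ax : ℕ := ((T xB).2 : ℕ) with hax
      set ay : ℕ := ((T yB).2 : ℕ) with hay
      have hch : ∀ d, d ≤ ax - ay →
          ∃ z : {x : Box r m // InDiag lam x},
            ((T z).2 : ℕ) = ax - d ∧ BoxGE z.1 xB.1 := by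
        intro d
        induction d with
        | zero => intro _; exact ⟨xB, by omega, boxGE_refl _⟩
        | succ d ih =>
          intro hd
          obtain ⟨z, hz1, hz2⟩ := ih (by omega)
          have hs := hsing xB (ax - (d + 1))
          have hxd : ax - (d + 1) + 1 = ax - d := by omega
          have hpos1 : 0 < Nat.card {y : {x : Box r m // InDiag lam x} //
              (T y).1 = (T xB).1 ∧ BoxGE y.1 xB.1 ∧ ((T y).2 : ℕ) = ax - (d + 1) + 1} := by
            haveI : Nonempty {y : {x : Box r m // InDiag lam x} //
                (T y).1 = (T xB).1 ∧ BoxGE y.1 xB.1 ∧ ((T y).2 : ℕ) = ax - (d + 1) + 1} :=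
              ⟨⟨z, Fin.ext (by rw [hcomp z, hcomp xB]), hz2, by omega⟩⟩
            exact Nat.card_pos
          have hpos2 : 0 < Nat.card {y : {x : Box r m // InDiag lam x} //
              (T y).1 = (T xB).1 ∧ BoxGE y.1 xB.1 ∧ ((T y).2 : ℕ) = ax - (d + 1)} :=
            lt_of_lt_of_le hpos1 hs
          obtain ⟨⟨y, _, hy2, hy3⟩⟩ := (Nat.card_pos_iff.mp hpos2).1
          exact ⟨y, hy3, hy2⟩
      obtain ⟨z, hz1, hz2⟩ := hch (ax - ay) (le_refl _)
      have hzy : z = yB := hinj (entry_ext _ _ (by rw [hcomp z, hcomp yB]) (by omega))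
      rw [hzy] at hz2
      rw [boxGE_def] at hz2
      simp only [hxB, hyB] at hz2
      have hx2 : xB.1.2.2 = 1 := rfl
      have hy2 : yB.1.2.2 = 0 := rfl
      omega
    exact Nat.card_of_isEmpty

end CQSA
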